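/- Translation invariance of policy sets (pumping corollary of the Bisimilarity Lemma): Let 𝒯=(T,σ,τ) be a tile assembly system on ℤ² (or on any space graph acted on by translations). Let X and X' be cut-sets separating the space graph into connected components (Y,Z) and (Y',Z') respectively, with dom σ ⊆ Y and dom σ ⊆ Y'. If there is a translation vector v with Z' = Z + v and 𝒟(𝒯,X') equals the translate of 𝒟(𝒯,X) by v (every edge of every glue movie translated by v), then 𝒫(𝒯,Z') equals the translate of 𝒫(𝒯,Z) by v (every position of every restricted assembly sequence translated by v). -/

import Mathlib

namespace ATAM

/-- The four planar directions (north, east, south, west). -/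
inductive Dir : Type
  | N | E | S | W
  deriving DecidableEq, Repr

instance : Fintype Dir :=
  ⟨⟨{Dir.N, Dir.E, Dir.S, Dir.W}, by decide⟩, by intro x; cases x <;> decide⟩

/-- A space graph: a regular graph in which every vertex has exactly one
incident edge in each direction, together with a coherent notion of
opposite directions. -/
structure SpaceGraph (D V : Type) where
  opp : D → D
  nbr : D → V → V
  opp_opp : ∀ d, opp (opp d) = d
  nbr_opp : ∀ d v, nbr (opp d) (nbr d v) = v

/-- A glue: a label together with a nonnegative integer strength.
A glue of strength `0` plays the role of the null glue. -/
abbrev Glue := ℕ × ℕ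

/-- The null glue. -/
def nullGlue : Glue := (0, 0)

/-- A tile type assigns a glue to each of its sides; tile types can be
neither rotated nor flipped. -/
abbrev Tile (D : Type) := D → Glue

/-- An assembly: a partial placement of tile types on the vertices. -/
abbrev Assembly (D V : Type) := V → Option (Tile D)

/-- The domain of an assembly. -/
def Assembly.dom {D V : Type} (α : Assembly D V) : Set V := {v | α v ≠ none}

section Core

variable {D V : Type} [Fintype D] [DecidableEq D] [DecidableEq V]

/-- Strength of the bond between the tile at `v` and the tile at its
`d`-neighbour: the two tiles interact iff the glues on their abutting
sides are equal and of positive strength. -/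
def bondStrength (G : SpaceGraph D V) (α : Assembly D V) (v : V) (d : D) : ℕ :=
  match α v, α (G.nbr d v) with
  | some t, some t' => if t d = t' (G.opp d) ∧ 0 < (t d).2 then (t d).2 else 0
  | _, _ => 0

/-- Strength with which tile `t`, placed at `z`, would bind along side `d`. -/
def sideStrength (G : SpaceGraph D V) (α : Assembly D V) (t : Tile D) (z : V) (d : D) : ℕ :=
  match α (G.nbr d z) with
  | some t' => if t d = t' (G.opp d) ∧ 0 < (t d).2 then (t d).2 else 0
  | none => 0

/-- Total binding strength of tile `t` at position `z`. -/
def attachStrength (G : SpaceGraph D V) (α : Assembly D V) (t : Tile D) (z : V) : ℕ :=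
  ∑ d : D, sideStrength G α t z d

/-- τ-stability: every cut of the binding graph has weight at least τ. -/
def StableAt (G : SpaceGraph D V) (τ : ℕ) (α : Assembly D V) : Prop :=
  ∀ A : Set V, (A ∩ α.dom).Nonempty → (α.dom \ A).Nonempty →
    ∃ B : Finset (V × D),
      (∀ p ∈ B, p.1 ∈ A ∩ α.dom ∧ G.nbr p.2 p.1 ∈ α.dom \ A) ∧
      τ ≤ ∑ p ∈ B, bondStrength G α p.1 p.2

end Core

/-- A tile assembly system: a finite tileset, a seed assembly and a temperature. -/
structure TAS (D V : Type) [Fintype D] [DecidableEq D] where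
  tiles : Finset (Tile D)
  seed : Assembly D V
  temp : ℕ

section Dynamics

variable {D V : Type} [Fintype D] [DecidableEq D] [DecidableEq V]

/-- The tile `t` (from the tileset) can attach to `α` at the empty position `z`
with total matching glue strength at least the temperature. -/
def CanAttach (G : SpaceGraph D V) (𝒯 : TAS D V) (α : Assembly D V) (t : Tile D) (z : V) : Prop :=
  t ∈ 𝒯.tiles ∧ α z = none ∧ 𝒯.temp ≤ attachStrength G α t z

/-- The assembly obtained by placing tile `t` at position `z`. -/
def attach (α : Assembly D V) (t : Tile D) (z : V) : Assembly D V :=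
  Function.update α z (some t)

/-- `IsSeqFrom G 𝒯 α l`: `l` is a valid sequence of single-tile attachments
starting from the assembly `α` in the system `𝒯`. -/
def IsSeqFrom (G : SpaceGraph D V) (𝒯 : TAS D V) : Assembly D V → List (Tile D × V) → Prop
  | _, [] => True
  | α, a :: l => CanAttach G 𝒯 α a.1 a.2 ∧ IsSeqFrom G 𝒯 (attach α a.1 a.2) l

/-- Result of performing a sequence of attachments. -/
def resultOf : Assembly D V → List (Tile D × V) → Assembly D V
  | α, [] => α
  | α, a :: l => resultOf (attach α a.1 a.2) l

/-- One (possibly stuttering) step of assembly. -/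
def Extends1 (G : SpaceGraph D V) (𝒯 : TAS D V) (α β : Assembly D V) : Prop :=
  β = α ∨ ∃ t z, CanAttach G 𝒯 α t z ∧ β = attach α t z

/-- `β` is producible from `α` in `𝒯`: it is the (possibly infinite) limit of a
chain of single-tile attachments starting from `α`. -/
def ProducibleFrom (G : SpaceGraph D V) (𝒯 : TAS D V) (α β : Assembly D V) : Prop :=
  ∃ f : ℕ → Assembly D V, f 0 = α ∧ (∀ n, Extends1 G 𝒯 (f n) (f (n + 1))) ∧
    ∀ v t, β v = some t ↔ ∃ n, f n v = some t

/-- The set of productions of `𝒯`. -/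
def Producible (G : SpaceGraph D V) (𝒯 : TAS D V) (β : Assembly D V) : Prop :=
  ProducibleFrom G 𝒯 𝒯.seed β

/-- Terminal productions. -/
def Terminal (G : SpaceGraph D V) (𝒯 : TAS D V) (β : Assembly D V) : Prop :=
  Producible G 𝒯 β ∧ ∀ t z, ¬ CanAttach G 𝒯 β t z

/-- Well-formedness of a TAS: positive temperature, finite seed whose tiles
come from the tileset, and τ-stable seed. -/
def WellFormed (G : SpaceGraph D V) (𝒯 : TAS D V) : Prop :=
  1 ≤ 𝒯.temp ∧ 𝒯.seed.dom.Finite ∧ (∀ v t, 𝒯.seed v = some t → t ∈ 𝒯.tiles) ∧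
    StableAt G 𝒯.temp 𝒯.seed

/-- Two adjacent tiles of `α` do not match: at least one of them has a glue of
strictly positive strength on their common side, and the glues there differ. -/
def HasMismatch (G : SpaceGraph D V) (α : Assembly D V) : Prop :=
  ∃ v d t t', α v = some t ∧ α (G.nbr d v) = some t' ∧
    t d ≠ t' (G.opp d) ∧ (0 < (t d).2 ∨ 0 < (t' (G.opp d)).2)

/-- A mismatch-free system: no producible assembly contains a mismatch. -/
def MismatchFree (G : SpaceGraph D V) (𝒯 : TAS D V) : Prop :=
  ∀ α, Producible G 𝒯 α → ¬ HasMismatch G α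

/-- A locally consistent system: mismatch-free, and every tile always attaches
with the sum of matching glue strengths exactly equal to the temperature. -/
def LocallyConsistent (G : SpaceGraph D V) (𝒯 : TAS D V) : Prop :=
  MismatchFree G 𝒯 ∧
    ∀ α t z, Producible G 𝒯 α → CanAttach G 𝒯 α t z →
      attachStrength G α t z = 𝒯.temp

end Dynamics

end ATAM

namespace ATAM

/-- Opposite directions in the plane. -/
def Dir.opp2 : Dir → Dir
  | .N => .S
  | .E => .W
  | .S => .N
  | .W => .E

/-- Unit vector of a direction. -/
def dvec : Dir → ℤ × ℤ
  | .N => (0, 1)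
  | .E => (1, 0)
  | .S => (0, -1)
  | .W => (-1, 0)

/-- The square grid of the plane, as a space graph. -/
def Z2 : SpaceGraph Dir (ℤ × ℤ) where
  opp := Dir.opp2
  nbr d v := v + dvec d
  opp_opp d := by cases d <;> rfl
  nbr_opp d v := by
    cases d <;>
      simp only [Dir.opp2, dvec, Prod.ext_iff, Prod.fst_add, Prod.snd_add] <;>
      constructor <;> ring

end ATAM

namespace ATAM

/-- Classical `decide`. -/
noncomputable def cdecide (P : Prop) : Bool := @decide P (Classical.propDecidable P)

/-- A glue addition: an (undirected) edge, an orientation, and a glue. -/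
abbrev GlueAdd (V : Type) := Sym2 V × Bool × Glue

section Movies

variable {V : Type} [DecidableEq V]

/-- The glue additions induced on the edge set `F` by the attachment of tile `t`
at position `z` onto `α`: one glue addition for each side of `t` (in clockwise
order starting from the north) whose edge lies in `F` and on which `t` matches
an already present neighbouring tile; the orientation is `+` (here `true`)
exactly for the south and west sides of the new tile. -/
noncomputable def attachMovie (G : SpaceGraph Dir V) (F : Set (Sym2 V))
    (α : Assembly Dir V) (t : Tile Dir) (z : V) : List (GlueAdd V) :=
  (([Dir.N, Dir.E, Dir.S, Dir.W].filter fun d =>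
      cdecide (s(z, G.nbr d z) ∈ F ∧
        ∃ t', α (G.nbr d z) = some t' ∧ t d = t' (G.opp d) ∧ 0 < (t d).2)).map
    fun d => (s(z, G.nbr d z), decide (d = Dir.S ∨ d = Dir.W), t d))

/-- The glue movie on `F` induced by an attachment sequence starting at `α`. -/
noncomputable def movieOf (G : SpaceGraph Dir V) (F : Set (Sym2 V)) :
    Assembly Dir V → List (Tile Dir × V) → List (GlueAdd V)
  | _, [] => []
  | α, a :: l => attachMovie G F α a.1 a.2 ++ movieOf G F (attach α a.1 a.2) l

/-- Restriction of an attachment sequence to the positions of `Z`. -/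
noncomputable def restrictSeq (Z : Set V) (l : List (Tile Dir × V)) : List (Tile Dir × V) :=
  l.filter fun a => cdecide (a.2 ∈ Z)

/-- The policy set of `𝒯` on `Z`: restrictions to `Z` of all assembly
sequences of `𝒯` (including the non-maximal ones). -/
noncomputable def PolicySet (G : SpaceGraph Dir V) (𝒯 : TAS Dir V) (Z : Set V) :
    Set (List (Tile Dir × V)) :=
  {p | ∃ l, IsSeqFrom G 𝒯 𝒯.seed l ∧ p = restrictSeq Z l}

/-- The diplomatic set of `𝒯` along `F`: glue movies on `F` induced by all
assembly sequences of `𝒯`. -/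
noncomputable def DiploSet (G : SpaceGraph Dir V) (𝒯 : TAS Dir V) (F : Set (Sym2 V)) :
    Set (List (GlueAdd V)) :=
  {m | ∃ l, IsSeqFrom G 𝒯 𝒯.seed l ∧ m = movieOf G F 𝒯.seed l}

/-- `S` is connected within the space graph `G`. -/
def ConnectedWithin (G : SpaceGraph Dir V) (S : Set V) : Prop :=
  ∀ u ∈ S, ∀ v ∈ S,
    Relation.ReflTransGen (fun a b => a ∈ S ∧ b ∈ S ∧ ∃ d, G.nbr d a = b) u v

/-- `X` is a cut-set separating `G` into the two connected components `Y` and `Z`. -/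
def IsCutSet (G : SpaceGraph Dir V) (X : Set (Sym2 V)) (Y Z : Set V) : Prop :=
  Y ∪ Z = Set.univ ∧ Disjoint Y Z ∧ Y.Nonempty ∧ Z.Nonempty ∧
    ConnectedWithin G Y ∧ ConnectedWithin G Z ∧
    X = {e | ∃ v d, v ∈ Y ∧ G.nbr d v ∈ Z ∧ e = s(v, G.nbr d v)}

end Movies

end ATAM

namespace ATAM
/-! ### Statement 2: translation invariance of policy sets -/

/-- Translation of a glue movie by a vector. -/
def trMovie (v : ℤ × ℤ) (m : List (GlueAdd (ℤ × ℤ))) : List (GlueAdd (ℤ × ℤ)) :=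
  m.map fun a => (Sym2.map (· + v) a.1, a.2)

/-- Translation of a restricted assembly sequence by a vector. -/
def trSeq (v : ℤ × ℤ) (l : List (Tile Dir × (ℤ × ℤ))) : List (Tile Dir × (ℤ × ℤ)) :=
  l.map fun a => (a.1, a.2 + v)

/-! Let `l` be an assembly sequence of `𝒯` and `l'` one whose glue movie on `X'` is the
translate by `v` of the movie of `l` on `X`. Merging `l` and `l'` along the common movie gives a
new assembly sequence that performs the steps of `l` inside `Z` (translated by `v`) and the steps
of `l'` outside `Z'`: its assemblies are the translates of those of `l` on `Z'` and those of `l'`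
elsewhere. Every attachment stays valid, since a bond across the cut is recorded in both movies,
at the same moment and with the same glue. Restricting the merged sequence to `Z'` gives the
translate of the restriction of `l` to `Z`; the other inclusion is the same argument for `-v`. -/

section Binding

variable {D V : Type}

def Binds (G : SpaceGraph D V) (α : Assembly D V) (t : Tile D) (z : V) (d : D) : Prop :=
  ∃ t', α (G.nbr d z) = some t' ∧ t d = t' (G.opp d) ∧ 0 < (t d).2

variable {G : SpaceGraph D V} {α γ : Assembly D V} {t t' : Tile D} {z z' : V} {d : D}

open Classical in
lemma sideStrength_eq_ite :
    sideStrength G α t z d = if Binds G α t z d then (t d).2 else 0 := by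
  unfold sideStrength Binds
  cases α (G.nbr d z) <;> simp

lemma attachStrength_le_of_binds [Fintype D] [DecidableEq D] [DecidableEq V]
    (h : ∀ d, Binds G α t z d → Binds G γ t z' d) :
    attachStrength G α t z ≤ attachStrength G γ t z' := by
  refine Finset.sum_le_sum fun d _ => ?_
  rw [sideStrength_eq_ite, sideStrength_eq_ite]
  split_ifs with hα hγ
  · exact le_rfl
  · exact absurd (h d hα) hγ
  all_goals exact Nat.zero_le _

lemma Binds.of_nbr_eq (hb : Binds G α t z d) (h : γ (G.nbr d z') = α (G.nbr d z)) :
    Binds G γ t z' d := by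
  rwa [Binds, h]

lemma Binds.of_glue_eq (hb : Binds G α t z d) (h : t d = t' d) : Binds G α t' z d := by
  obtain ⟨s, hs, hmatch, hpos⟩ := hb
  exact ⟨s, hs, h ▸ hmatch, h ▸ hpos⟩

end Binding

section Movies

variable {V : Type}

lemma cdecide_eq_true_iff {P : Prop} : cdecide P = true ↔ P :=
  @decide_eq_true_iff P (Classical.propDecidable P)

lemma Dir.mem_list (d : Dir) : d ∈ [Dir.N, Dir.E, Dir.S, Dir.W] := by
  cases d <;> simp

def sideEvent (G : SpaceGraph Dir V) (z : V) (t : Tile Dir) (d : Dir) : GlueAdd V :=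
  (s(z, G.nbr d z), decide (d = Dir.S ∨ d = Dir.W), t d)

def AddedAt (G : SpaceGraph Dir V) (z : V) (e : GlueAdd V) : Prop :=
  ∃ t d, sideEvent G z t d = e

variable {G : SpaceGraph Dir V} {F : Set (Sym2 V)} {α : Assembly Dir V} {t : Tile Dir}
  {z w : V} {e : GlueAdd V}

lemma mem_attachMovie : e ∈ attachMovie G F α t z ↔
    ∃ d, (s(z, G.nbr d z) ∈ F ∧ Binds G α t z d) ∧ sideEvent G z t d = e := by
  simp only [attachMovie, List.mem_map, List.mem_filter, cdecide_eq_true_iff, Dir.mem_list,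
    true_and]
  rfl

lemma sideEvent_mem_attachMovie {d : Dir} (hF : s(z, G.nbr d z) ∈ F) (hb : Binds G α t z d) :
    sideEvent G z t d ∈ attachMovie G F α t z :=
  mem_attachMovie.2 ⟨d, ⟨hF, hb⟩, rfl⟩

lemma addedAt_of_mem_attachMovie (h : e ∈ attachMovie G F α t z) : AddedAt G z e := by
  obtain ⟨d, -, rfl⟩ := mem_attachMovie.1 h
  exact ⟨t, d, rfl⟩

lemma attach_self [DecidableEq V] : attach α t z z = some t := Function.update_self _ _ _

lemma attach_ne_none_self [DecidableEq V] : attach α t z z ≠ none := by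
  simp [attach_self]

lemma attach_ne_none [DecidableEq V] (h : α w ≠ none) : attach α t z w ≠ none := by
  by_cases hw : w = z
  · simp [hw, attach_self]
  · rwa [attach, Function.update_of_ne hw]

end Movies

end ATAM

theorem List.eq_and_eq_of_append_eq_append {A : Type} {p : A → Prop} {B C M M' : List A}
    (h : B ++ M = C ++ M') (hB : ∀ x ∈ B, p x) (hC : ∀ x ∈ C, p x)
    (hM : ∀ x ∈ M, ¬ p x) (hM' : ∀ x ∈ M', ¬ p x) : B = C ∧ M = M' := by
  rcases List.append_eq_append_iff.1 h with ⟨as, rfl, rfl⟩ | ⟨bs, rfl, rfl⟩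
  · obtain rfl : as = [] := List.eq_nil_iff_forall_not_mem.2 fun x hx =>
      hM x (List.mem_append_left _ hx) (hC x (List.mem_append_right _ hx))
    simp
  · obtain rfl : bs = [] := List.eq_nil_iff_forall_not_mem.2 fun x hx =>
      hM' x (List.mem_append_left _ hx) (hB x (List.mem_append_right _ hx))
    simp

namespace ATAM

section Grid

variable {z z' w v : ℤ × ℤ} {t t' : Tile Dir} {d d' : Dir}

lemma Z2_nbr_add : Z2.nbr d (z + v) = Z2.nbr d z + v := by
  simp only [Z2]
  abel

/-- The orientation bit tells which endpoint of the edge carries the newly attached tile. -/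
lemma sideEvent_inj (h : sideEvent Z2 z t d = sideEvent Z2 z' t' d') :
    z = z' ∧ d = d' ∧ t d = t' d' := by
  simp only [sideEvent, Prod.mk.injEq, Sym2.eq_iff, Z2] at h
  obtain ⟨hedge | ⟨rfl, hz⟩, hbit, hglue⟩ := h
  · obtain ⟨rfl, hz⟩ := hedge
    have hdd' : d = d' := by
      have := add_left_cancel hz
      revert this
      cases d <;> cases d' <;> decide
    exact ⟨rfl, hdd', hdd' ▸ hglue⟩
  · exfalso
    have hsum : dvec d' + dvec d = 0 := by
      rw [add_assoc] at hz
      exact add_eq_left.1 hz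
    revert hsum hbit
    cases d <;> cases d' <;> decide

lemma AddedAt.unique {e : GlueAdd (ℤ × ℤ)} (h : AddedAt Z2 z e) (h' : AddedAt Z2 z' e) :
    z = z' := by
  obtain ⟨t, d, rfl⟩ := h
  obtain ⟨t', d', h'⟩ := h'
  exact (sideEvent_inj h').1.symm

lemma binds_of_sideEvent_mem {F : Set (Sym2 (ℤ × ℤ))} {α : Assembly Dir (ℤ × ℤ)}
    (h : sideEvent Z2 z t d ∈ attachMovie Z2 F α t' z) : Binds Z2 α t z d := by
  obtain ⟨d', ⟨-, hb⟩, he⟩ := mem_attachMovie.1 h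
  obtain ⟨-, rfl, hglue⟩ := sideEvent_inj he
  exact hb.of_glue_eq hglue

lemma not_addedAt_of_mem_movieOf {𝒯 : TAS Dir (ℤ × ℤ)} {F : Set (Sym2 (ℤ × ℤ))} :
    ∀ {α : Assembly Dir (ℤ × ℤ)} {l : List (Tile Dir × (ℤ × ℤ))} {e : GlueAdd (ℤ × ℤ)},
      IsSeqFrom Z2 𝒯 α l → α w ≠ none → e ∈ movieOf Z2 F α l → ¬ AddedAt Z2 w e
  | _, [], _, _, _, he => absurd he List.not_mem_nil
  | α, (t, z) :: l, e, ⟨hcan, hl⟩, hw, he => by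
    rcases List.mem_append.1 he with he | he
    · intro hwe
      exact hw ((addedAt_of_mem_attachMovie he).unique hwe ▸ hcan.2.1)
    · exact not_addedAt_of_mem_movieOf hl (attach_ne_none hw) he

def translateAdd (v : ℤ × ℤ) (a : GlueAdd (ℤ × ℤ)) : GlueAdd (ℤ × ℤ) :=
  (Sym2.map (· + v) a.1, a.2)

lemma trMovie_eq_map (v : ℤ × ℤ) (m : List (GlueAdd (ℤ × ℤ))) :
    trMovie v m = m.map (translateAdd v) := rfl

lemma translateAdd_neg_translateAdd (v : ℤ × ℤ) (a : GlueAdd (ℤ × ℤ)) :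
    translateAdd (-v) (translateAdd v a) = a := by
  have hid : ((· + -v) ∘ (· + v)) = (id : ℤ × ℤ → ℤ × ℤ) := by
    funext x
    simp
  simp only [translateAdd, Sym2.map_map, hid, Sym2.map_id', id_eq]

lemma translateAdd_injective (v : ℤ × ℤ) : Function.Injective (translateAdd v) :=
  Function.LeftInverse.injective (translateAdd_neg_translateAdd v)

lemma translateAdd_mem_trMovie {a : GlueAdd (ℤ × ℤ)} {m : List (GlueAdd (ℤ × ℤ))} :
    translateAdd v a ∈ trMovie v m ↔ a ∈ m :=
  List.mem_map_of_injective (translateAdd_injective v)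

lemma trMovie_append (v : ℤ × ℤ) (m m' : List (GlueAdd (ℤ × ℤ))) :
    trMovie v (m ++ m') = trMovie v m ++ trMovie v m' :=
  List.map_append

lemma trMovie_neg_trMovie (v : ℤ × ℤ) (m : List (GlueAdd (ℤ × ℤ))) :
    trMovie (-v) (trMovie v m) = m := by
  rw [trMovie_eq_map, trMovie_eq_map, List.map_map]
  exact List.map_id'' (translateAdd_neg_translateAdd v) m

lemma trSeq_trSeq_neg (v : ℤ × ℤ) (l : List (Tile Dir × (ℤ × ℤ))) :
    trSeq v (trSeq (-v) l) = l := by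
  simp [trSeq, Function.comp_def]

lemma translateAdd_sideEvent : translateAdd v (sideEvent Z2 z t d) = sideEvent Z2 (z + v) t d := by
  simp only [translateAdd, sideEvent, Sym2.map_mk, Z2_nbr_add]

lemma addedAt_translateAdd_iff {a : GlueAdd (ℤ × ℤ)} :
    AddedAt Z2 (z + v) (translateAdd v a) ↔ AddedAt Z2 z a := by
  constructor
  · rintro ⟨t, d, h⟩
    refine ⟨t, d, ?_⟩
    rw [← translateAdd_neg_translateAdd v a, ← h, translateAdd_sideEvent, add_neg_cancel_right]
  · rintro ⟨t, d, rfl⟩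
    exact ⟨t, d, translateAdd_sideEvent.symm⟩

end Grid

section CutSets

variable {V : Type} {G : SpaceGraph Dir V} {X : Set (Sym2 V)} {Y Z : Set V}

def ContainsBoundary (G : SpaceGraph Dir V) (X : Set (Sym2 V)) (Z : Set V) : Prop :=
  ∀ z d, Xor (z ∈ Z) (G.nbr d z ∈ Z) → s(z, G.nbr d z) ∈ X

lemma IsCutSet.containsBoundary (h : IsCutSet G X Y Z) : ContainsBoundary G X Z := by
  obtain ⟨hYZ, -, -, -, -, -, rfl⟩ := h
  have hY : ∀ w, w ∉ Z → w ∈ Y := fun w hw =>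
    ((hYZ ▸ Set.mem_univ w : w ∈ Y ∪ Z)).resolve_right hw
  rintro z d (⟨hz, hn⟩ | ⟨hn, hz⟩)
  · exact ⟨G.nbr d z, G.opp d, hY _ hn, by rwa [G.nbr_opp], by rw [G.nbr_opp, Sym2.eq_swap]⟩
  · exact ⟨z, d, hY z hz, hn, rfl⟩

lemma IsCutSet.eq_none_of_dom_subset {α : Assembly Dir V} {z : V} (h : IsCutSet G X Y Z)
    (hα : α.dom ⊆ Y) (hz : z ∈ Z) : α z = none := by
  by_contra hne
  exact Set.disjoint_left.1 h.2.1 (hα hne) hz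

end CutSets

section Splice

variable {Z Z' : Set (ℤ × ℤ)} {v : ℤ × ℤ}

lemma add_mem_iff_of_eq_image (hZ : Z' = (· + v) '' Z) {z : ℤ × ℤ} : z + v ∈ Z' ↔ z ∈ Z := by
  simp [hZ]

lemma image_add_neg_of_eq_image_add (hZ : Z' = (· + v) '' Z) : Z = (· + -v) '' Z' := by
  rw [hZ, Set.image_image]
  simp

open Classical in
noncomputable def spliceAsm (Z' : Set (ℤ × ℤ)) (v : ℤ × ℤ) (α β : Assembly Dir (ℤ × ℤ)) :
    Assembly Dir (ℤ × ℤ) :=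
  fun w => if w ∈ Z' then α (w - v) else β w

variable {α β : Assembly Dir (ℤ × ℤ)} {t t' : Tile Dir} {z w : ℤ × ℤ}

lemma spliceAsm_of_mem (hw : w ∈ Z') : spliceAsm Z' v α β w = α (w - v) := if_pos hw

lemma spliceAsm_of_not_mem (hw : w ∉ Z') : spliceAsm Z' v α β w = β w := if_neg hw

lemma spliceAsm_add_of_mem (hZ : Z' = (· + v) '' Z) (hz : z ∈ Z) :
    spliceAsm Z' v α β (z + v) = α z := by
  rw [spliceAsm_of_mem ((add_mem_iff_of_eq_image hZ).2 hz), add_sub_cancel_right]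

lemma spliceAsm_eq_right (h : ∀ w ∈ Z', α (w - v) = β w) : spliceAsm Z' v α β = β := by
  funext w
  by_cases hw : w ∈ Z'
  · rw [spliceAsm_of_mem hw, h w hw]
  · rw [spliceAsm_of_not_mem hw]

lemma spliceAsm_attach_left_of_mem (hZ : Z' = (· + v) '' Z) (hz : z ∈ Z) :
    spliceAsm Z' v (attach α t z) β = attach (spliceAsm Z' v α β) t (z + v) := by
  funext w
  by_cases hw : w ∈ Z'
  · simp only [attach, Function.update_apply, spliceAsm_of_mem hw, sub_eq_iff_eq_add]
  · have hwz : w ≠ z + v := fun h => hw (h ▸ (add_mem_iff_of_eq_image hZ).2 hz)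
    simp only [attach, Function.update_of_ne hwz, spliceAsm_of_not_mem hw]

lemma spliceAsm_attach_left_of_not_mem (hZ : Z' = (· + v) '' Z) (hz : z ∉ Z) :
    spliceAsm Z' v (attach α t z) β = spliceAsm Z' v α β := by
  funext w
  by_cases hw : w ∈ Z'
  · have hwz : w - v ≠ z := by
      rintro rfl
      exact hz ((add_mem_iff_of_eq_image hZ).1 (by rwa [sub_add_cancel]))
    rw [spliceAsm_of_mem hw, spliceAsm_of_mem hw, attach, Function.update_of_ne hwz]
  · rw [spliceAsm_of_not_mem hw, spliceAsm_of_not_mem hw]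

lemma spliceAsm_attach_right_of_mem (hz : z ∈ Z') :
    spliceAsm Z' v α (attach β t z) = spliceAsm Z' v α β := by
  funext w
  by_cases hw : w ∈ Z'
  · rw [spliceAsm_of_mem hw, spliceAsm_of_mem hw]
  · have hwz : w ≠ z := fun h => hw (h ▸ hz)
    rw [spliceAsm_of_not_mem hw, spliceAsm_of_not_mem hw, attach, Function.update_of_ne hwz]

lemma spliceAsm_attach_right_of_not_mem (hz : z ∉ Z') :
    spliceAsm Z' v α (attach β t z) = attach (spliceAsm Z' v α β) t z := by
  funext w
  by_cases hw : w ∈ Z'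
  · have hwz : w ≠ z := fun h => hz (h ▸ hw)
    rw [spliceAsm_of_mem hw, attach, Function.update_of_ne hwz, spliceAsm_of_mem hw]
  · simp only [attach, Function.update_apply, spliceAsm_of_not_mem hw]

variable {X X' : Set (Sym2 (ℤ × ℤ))} {d : Dir}

lemma binds_spliceAsm_left (hX : ContainsBoundary Z2 X Z) (hZ : Z' = (· + v) '' Z)
    (hz : z ∈ Z) (hsub : trMovie v (attachMovie Z2 X α t z) ⊆ attachMovie Z2 X' β t' (z + v))
    (hb : Binds Z2 α t z d) : Binds Z2 (spliceAsm Z' v α β) t (z + v) d := by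
  by_cases hn : Z2.nbr d z ∈ Z
  · exact hb.of_nbr_eq (by rw [Z2_nbr_add, spliceAsm_add_of_mem hZ hn])
  · have hev := hsub (translateAdd_mem_trMovie.2
      (sideEvent_mem_attachMovie (hX z d (Or.inl ⟨hz, hn⟩)) hb))
    rw [translateAdd_sideEvent] at hev
    refine (binds_of_sideEvent_mem hev).of_nbr_eq (spliceAsm_of_not_mem ?_)
    rwa [Z2_nbr_add, add_mem_iff_of_eq_image hZ]

lemma binds_spliceAsm_right (hX' : ContainsBoundary Z2 X' Z') (hZ : Z' = (· + v) '' Z)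
    (hz : z ∉ Z) (hsub : attachMovie Z2 X' β t' (z + v) ⊆ trMovie v (attachMovie Z2 X α t z))
    (hb : Binds Z2 β t' (z + v) d) : Binds Z2 (spliceAsm Z' v α β) t' (z + v) d := by
  by_cases hn : Z2.nbr d (z + v) ∈ Z'
  · have hz' : z + v ∉ Z' := by rwa [add_mem_iff_of_eq_image hZ]
    have hev := hsub (sideEvent_mem_attachMovie (hX' _ d (Or.inr ⟨hn, hz'⟩)) hb)
    rw [← translateAdd_sideEvent, translateAdd_mem_trMovie] at hev
    refine (binds_of_sideEvent_mem hev).of_nbr_eq ?_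
    rw [Z2_nbr_add] at hn ⊢
    rw [spliceAsm_add_of_mem hZ ((add_mem_iff_of_eq_image hZ).1 hn)]
  · exact hb.of_nbr_eq (spliceAsm_of_not_mem hn)

variable {𝒯 : TAS Dir (ℤ × ℤ)}

lemma canAttach_spliceAsm_left (hX : ContainsBoundary Z2 X Z) (hZ : Z' = (· + v) '' Z)
    (hz : z ∈ Z) (hcan : CanAttach Z2 𝒯 α t z)
    (hsub : trMovie v (attachMovie Z2 X α t z) ⊆ attachMovie Z2 X' β t' (z + v)) :
    CanAttach Z2 𝒯 (spliceAsm Z' v α β) t (z + v) :=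
  ⟨hcan.1, (spliceAsm_add_of_mem hZ hz).trans hcan.2.1,
    hcan.2.2.trans (attachStrength_le_of_binds fun _ => binds_spliceAsm_left hX hZ hz hsub)⟩

lemma canAttach_spliceAsm_right (hX' : ContainsBoundary Z2 X' Z') (hZ : Z' = (· + v) '' Z)
    (hz : z ∉ Z) (hcan : CanAttach Z2 𝒯 β t' (z + v))
    (hsub : attachMovie Z2 X' β t' (z + v) ⊆ trMovie v (attachMovie Z2 X α t z)) :
    CanAttach Z2 𝒯 (spliceAsm Z' v α β) t' (z + v) :=
  ⟨hcan.1, (spliceAsm_of_not_mem (by rwa [add_mem_iff_of_eq_image hZ])).trans hcan.2.1,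
    hcan.2.2.trans (attachStrength_le_of_binds fun _ => binds_spliceAsm_right hX' hZ hz hsub)⟩

end Splice

section Interleaving

variable {𝒯 : TAS Dir (ℤ × ℤ)} {X X' : Set (Sym2 (ℤ × ℤ))} {Z Z' : Set (ℤ × ℤ)} {v : ℤ × ℤ}
  {α β : Assembly Dir (ℤ × ℤ)} {t t' : Tile Dir} {z z' : ℤ × ℤ}
  {l lt lt' : List (Tile Dir × (ℤ × ℤ))}

/-- Only the first attachment of each movie adds glues at its own position: later attachments
go to empty positions. -/
lemma heads_eq_of_movieOf_eq (hl : IsSeqFrom Z2 𝒯 (attach α t z) lt)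
    (hl' : IsSeqFrom Z2 𝒯 (attach β t' z') lt')
    (hB : attachMovie Z2 X α t z ≠ []) (hC : attachMovie Z2 X' β t' z' ≠ [])
    (hm : movieOf Z2 X' β ((t', z') :: lt') = trMovie v (movieOf Z2 X α ((t, z) :: lt))) :
    z' = z + v ∧ attachMovie Z2 X' β t' z' = trMovie v (attachMovie Z2 X α t z) ∧
      movieOf Z2 X' (attach β t' z') lt' = trMovie v (movieOf Z2 X (attach α t z) lt) := by
  simp only [movieOf, trMovie_append] at hm
  have hz' : z' = z + v := by
    obtain ⟨e, B, hBe⟩ := List.exists_cons_of_ne_nil hB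
    obtain ⟨f, C, hCf⟩ := List.exists_cons_of_ne_nil hC
    have hf : f = translateAdd v e := by
      rw [hBe, hCf, trMovie_eq_map] at hm
      exact (List.cons.inj hm).1
    have he : AddedAt Z2 z e := addedAt_of_mem_attachMovie (hBe ▸ List.mem_cons_self)
    have hf' : AddedAt Z2 z' f := addedAt_of_mem_attachMovie (hCf ▸ List.mem_cons_self)
    exact hf'.unique (hf ▸ addedAt_translateAdd_iff.2 he)
  subst hz'
  refine ⟨rfl, List.eq_and_eq_of_append_eq_append (p := AddedAt Z2 (z + v)) hm
    (fun _ => addedAt_of_mem_attachMovie) ?_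
    (fun _ => not_addedAt_of_mem_movieOf hl' (attach_ne_none_self)) ?_⟩
  · rw [trMovie_eq_map, List.forall_mem_map]
    exact fun _ he => addedAt_translateAdd_iff.2 (addedAt_of_mem_attachMovie he)
  · rw [trMovie_eq_map, List.forall_mem_map]
    exact fun _ he hadd =>
      not_addedAt_of_mem_movieOf hl attach_ne_none_self he (addedAt_translateAdd_iff.1 hadd)

lemma restrictSeq_cons_of_mem {a : Tile Dir × (ℤ × ℤ)} (h : a.2 ∈ Z) :
    restrictSeq Z (a :: l) = a :: restrictSeq Z l := by
  simp [restrictSeq, cdecide_eq_true_iff, h]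

lemma restrictSeq_cons_of_not_mem {a : Tile Dir × (ℤ × ℤ)} (h : a.2 ∉ Z) :
    restrictSeq Z (a :: l) = restrictSeq Z l := by
  simp [restrictSeq, cdecide_eq_true_iff, h]

variable (𝒯 Z Z' v) in
def HasSplicedSeq (α β : Assembly Dir (ℤ × ℤ)) (l : List (Tile Dir × (ℤ × ℤ))) : Prop :=
  ∃ L, IsSeqFrom Z2 𝒯 (spliceAsm Z' v α β) L ∧ restrictSeq Z' L = trSeq v (restrictSeq Z l)

lemma HasSplicedSeq.cons_left_of_mem (hX : ContainsBoundary Z2 X Z) (hZ : Z' = (· + v) '' Z)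
    (hz : z ∈ Z) (hcan : CanAttach Z2 𝒯 α t z)
    (hsub : trMovie v (attachMovie Z2 X α t z) ⊆ attachMovie Z2 X' β t' (z + v))
    (h : HasSplicedSeq 𝒯 Z Z' v (attach α t z) β lt) :
    HasSplicedSeq 𝒯 Z Z' v α β ((t, z) :: lt) := by
  obtain ⟨L, hL, hres⟩ := h
  rw [spliceAsm_attach_left_of_mem hZ hz] at hL
  refine ⟨(t, z + v) :: L, ⟨canAttach_spliceAsm_left hX hZ hz hcan hsub, hL⟩, ?_⟩
  rw [restrictSeq_cons_of_mem ((add_mem_iff_of_eq_image hZ).2 hz), restrictSeq_cons_of_mem hz,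
    hres]
  rfl

lemma HasSplicedSeq.cons_left_of_not_mem (hZ : Z' = (· + v) '' Z) (hz : z ∉ Z)
    (h : HasSplicedSeq 𝒯 Z Z' v (attach α t z) β lt) :
    HasSplicedSeq 𝒯 Z Z' v α β ((t, z) :: lt) := by
  rwa [HasSplicedSeq, restrictSeq_cons_of_not_mem (a := (t, z)) hz,
    ← spliceAsm_attach_left_of_not_mem hZ hz (t := t)]

lemma HasSplicedSeq.of_attach_right_of_mem (hz : z ∈ Z')
    (h : HasSplicedSeq 𝒯 Z Z' v α (attach β t' z) l) : HasSplicedSeq 𝒯 Z Z' v α β l := by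
  rwa [HasSplicedSeq, spliceAsm_attach_right_of_mem hz] at h

lemma HasSplicedSeq.of_attach_right_of_not_mem (hX' : ContainsBoundary Z2 X' Z')
    (hZ : Z' = (· + v) '' Z) (hz : z ∉ Z) (hcan : CanAttach Z2 𝒯 β t' (z + v))
    (hsub : attachMovie Z2 X' β t' (z + v) ⊆ trMovie v (attachMovie Z2 X α t z))
    (h : HasSplicedSeq 𝒯 Z Z' v α (attach β t' (z + v)) l) : HasSplicedSeq 𝒯 Z Z' v α β l := by
  have hz' : z + v ∉ Z' := by rwa [add_mem_iff_of_eq_image hZ]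
  obtain ⟨L, hL, hres⟩ := h
  rw [spliceAsm_attach_right_of_not_mem hz'] at hL
  exact ⟨(t', z + v) :: L, ⟨canAttach_spliceAsm_right hX' hZ hz hcan hsub, hL⟩,
    (restrictSeq_cons_of_not_mem hz').trans hres⟩

/-- A head step that adds no glue on the cut is replayed at once (or dropped if it lies on the
wrong side); otherwise both head steps add the same glues, so they sit at translated positions. -/
theorem hasSplicedSeq_of_movieOf_eq (hX : ContainsBoundary Z2 X Z)
    (hX' : ContainsBoundary Z2 X' Z') (hZ : Z' = (· + v) '' Z) :
    ∀ {α β : Assembly Dir (ℤ × ℤ)} {l l' : List (Tile Dir × (ℤ × ℤ))},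
      IsSeqFrom Z2 𝒯 α l → IsSeqFrom Z2 𝒯 β l' →
      movieOf Z2 X' β l' = trMovie v (movieOf Z2 X α l) → HasSplicedSeq 𝒯 Z Z' v α β l
  | _, _, [], _, _, _, _ => ⟨[], trivial, rfl⟩
  | α, β, (t, z) :: lt, l', hl, hl', hm => by
    have hcan : CanAttach Z2 𝒯 α t z := hl.1
    have hlt : IsSeqFrom Z2 𝒯 (attach α t z) lt := hl.2
    by_cases hB : attachMovie Z2 X α t z = []
    · have hm' : movieOf Z2 X' β l' = trMovie v (movieOf Z2 X (attach α t z) lt) := by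
        rwa [movieOf, hB, List.nil_append] at hm
      have ih := hasSplicedSeq_of_movieOf_eq hX hX' hZ hlt hl' hm'
      by_cases hz : z ∈ Z
      · exact ih.cons_left_of_mem hX hZ hz hcan (X' := X) (t' := t) (by simp [hB, trMovie])
      · exact ih.cons_left_of_not_mem hZ hz
    cases l' with
    | nil => exact (hB (List.append_eq_nil_iff.1 (List.map_eq_nil_iff.1 hm.symm)).1).elim
    | cons b lt' =>
      obtain ⟨t', z'⟩ := b
      obtain ⟨hcan', hlt'⟩ : CanAttach Z2 𝒯 β t' z' ∧ IsSeqFrom Z2 𝒯 (attach β t' z') lt' := hl'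
      by_cases hC : attachMovie Z2 X' β t' z' = []
      · have hm' : movieOf Z2 X' (attach β t' z') lt' =
            trMovie v (movieOf Z2 X α ((t, z) :: lt)) := by
          rwa [movieOf, hC, List.nil_append] at hm
        have ih := hasSplicedSeq_of_movieOf_eq hX hX' hZ hl hlt' hm'
        obtain ⟨w, rfl⟩ : ∃ w, z' = w + v := ⟨z' - v, (sub_add_cancel z' v).symm⟩
        by_cases hw : w ∈ Z
        · exact ih.of_attach_right_of_mem ((add_mem_iff_of_eq_image hZ).2 hw)
        · exact ih.of_attach_right_of_not_mem hX' hZ hw hcan' (X := X') (t := t') (by simp [hC])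
      · obtain ⟨rfl, hhead, htail⟩ := heads_eq_of_movieOf_eq hlt hlt' hB hC hm
        have ih := hasSplicedSeq_of_movieOf_eq hX hX' hZ hlt hlt' htail
        by_cases hz : z ∈ Z
        · exact (ih.of_attach_right_of_mem ((add_mem_iff_of_eq_image hZ).2 hz)).cons_left_of_mem
            hX hZ hz hcan (by rw [hhead]; exact List.Subset.refl _)
        · exact (ih.cons_left_of_not_mem hZ hz).of_attach_right_of_not_mem hX' hZ hz hcan'
            (X := X) (t := t) (by rw [hhead]; exact List.Subset.refl _)
termination_by _ _ l l' => l.length + l'.length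

theorem trSeq_image_policySet_subset (hX : ContainsBoundary Z2 X Z)
    (hX' : ContainsBoundary Z2 X' Z') (hZ : Z' = (· + v) '' Z)
    (hσ : ∀ z ∈ Z, 𝒯.seed z = none) (hσ' : ∀ z ∈ Z', 𝒯.seed z = none)
    (hD : trMovie v '' DiploSet Z2 𝒯 X ⊆ DiploSet Z2 𝒯 X') :
    trSeq v '' PolicySet Z2 𝒯 Z ⊆ PolicySet Z2 𝒯 Z' := by
  rintro _ ⟨_, ⟨l, hl, rfl⟩, rfl⟩
  obtain ⟨l', hl', hm⟩ := hD ⟨_, ⟨l, hl, rfl⟩, rfl⟩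
  obtain ⟨L, hL, hres⟩ := hasSplicedSeq_of_movieOf_eq hX hX' hZ hl hl' hm.symm
  have hseed : spliceAsm Z' v 𝒯.seed 𝒯.seed = 𝒯.seed := spliceAsm_eq_right fun w hw => by
    rw [hσ' w hw, hσ _ ((add_mem_iff_of_eq_image hZ).1 (by rwa [sub_add_cancel]))]
  exact ⟨L, hseed ▸ hL, hres.symm⟩

end Interleaving

theorem policy_translation_general (𝒯 : TAS Dir (ℤ × ℤ))
    (X X' : Set (Sym2 (ℤ × ℤ))) (Y Z Y' Z' : Set (ℤ × ℤ)) (v : ℤ × ℤ)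
    (hX : IsCutSet Z2 X Y Z) (hY : 𝒯.seed.dom ⊆ Y)
    (hX' : IsCutSet Z2 X' Y' Z') (hY' : 𝒯.seed.dom ⊆ Y')
    (hZ : Z' = (· + v) '' Z)
    (hD : DiploSet Z2 𝒯 X' = trMovie v '' DiploSet Z2 𝒯 X) :
    PolicySet Z2 𝒯 Z' = trSeq v '' PolicySet Z2 𝒯 Z := by
  have hσ : ∀ z ∈ Z, 𝒯.seed z = none := fun _ => hX.eq_none_of_dom_subset hY
  have hσ' : ∀ z ∈ Z', 𝒯.seed z = none := fun _ => hX'.eq_none_of_dom_subset hY'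
  refine Set.Subset.antisymm (fun p hp => ⟨trSeq (-v) p, ?_, trSeq_trSeq_neg v p⟩)
    (trSeq_image_policySet_subset hX.containsBoundary hX'.containsBoundary hZ hσ hσ' hD.ge)
  refine trSeq_image_policySet_subset hX'.containsBoundary hX.containsBoundary
    (image_add_neg_of_eq_image_add hZ) hσ' hσ ?_ ⟨p, hp, rfl⟩
  rw [hD, Set.image_image]
  simp only [trMovie_neg_trMovie, Set.image_id', subset_refl]

theorem policy_translation (𝒯 : TAS Dir (ℤ × ℤ)) (hWF : WellFormed Z2 𝒯)
    (X X' : Set (Sym2 (ℤ × ℤ))) (Y Z Y' Z' : Set (ℤ × ℤ)) (v : ℤ × ℤ)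
    (hX : IsCutSet Z2 X Y Z) (hY : 𝒯.seed.dom ⊆ Y)
    (hX' : IsCutSet Z2 X' Y' Z') (hY' : 𝒯.seed.dom ⊆ Y')
    (hZ : Z' = (· + v) '' Z)
    (hD : DiploSet Z2 𝒯 X' = trMovie v '' DiploSet Z2 𝒯 X) :
    PolicySet Z2 𝒯 Z' = trSeq v '' PolicySet Z2 𝒯 Z :=
  policy_translation_general 𝒯 X X' Y Z Y' Z' v hX hY hX' hY' hZ hD

end ATAM
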